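/- If H is a quasi-ideal of a Leibniz algebra L over a field F, then [L,(H²)^n] + [(H²)^n,L] ⊆ (H²)^{n-1} for all n ≥ 2, where H² = [H,H] and (H²)^k denotes the k-th term of the lower central series of the subalgebra H². -/
import Mathlib


/-! Basic definitions for (right) Leibniz algebras given by a bilinear bracket
on a vector space, following Towers, "Quasi-ideals of Leibniz algebras". -/

section LeibnizDefs

variable {F L : Type*} [Field F] [AddCommGroup L] [Module F L]

/-- The (right) Leibniz identity for a bilinear bracket `b`:
`[x,[y,z]] = [[x,y],z] - [[x,z],y]`. -/
def IsLeibniz (b : L →ₗ[F] L →ₗ[F] L) : Prop :=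
  ∀ x y z : L, b x (b y z) = b (b x y) z - b (b x z) y

/-- `[A,C]`: the span of all brackets `[a,c]` with `a ∈ A`, `c ∈ C`. -/
def bspan (b : L →ₗ[F] L →ₗ[F] L) (A C : Submodule F L) : Submodule F L :=
  Submodule.span F {z : L | ∃ a ∈ A, ∃ c ∈ C, z = b a c}

/-- A subalgebra is a subspace `H` with `[H,H] ⊆ H`. -/
def IsSubalgebra (b : L →ₗ[F] L →ₗ[F] L) (H : Submodule F L) : Prop :=
  bspan b H H ≤ H

/-- An ideal is a subspace `A` with `[A,L] + [L,A] ⊆ A`. -/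
def IsIdeal (b : L →ₗ[F] L →ₗ[F] L) (A : Submodule F L) : Prop :=
  bspan b A ⊤ ⊔ bspan b ⊤ A ≤ A

/-- A quasi-ideal of `L` is a subspace `H` with `[H,K] + [K,H] ⊆ H + K`
for every subspace `K` of `L`. -/
def IsQuasiIdeal (b : L →ₗ[F] L →ₗ[F] L) (H : Submodule F L) : Prop :=
  ∀ K : Submodule F L, bspan b H K ⊔ bspan b K H ≤ H ⊔ K

/-- `H` is a quasi-ideal of the subalgebra `E`: `H ⊆ E` and
`[H,K] + [K,H] ⊆ H + K` for every subspace `K` of `E`. -/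
def IsQuasiIdealIn (b : L →ₗ[F] L →ₗ[F] L) (H E : Submodule F L) : Prop :=
  H ≤ E ∧ ∀ K : Submodule F L, K ≤ E → bspan b H K ⊔ bspan b K H ≤ H ⊔ K

/-- `H` is an `m`-step subquasi-ideal of `L`: there is a chain of subalgebras
`H = H_m qu H_{m-1} qu ... qu H_0 = L`, each a quasi-ideal of the next.
(Here `C i` is `H_i`.) -/
def IsSubquasiIdealSteps (b : L →ₗ[F] L →ₗ[F] L) (m : ℕ) (H : Submodule F L) : Prop :=
  ∃ C : ℕ → Submodule F L, C 0 = ⊤ ∧ C m = H ∧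
    (∀ i ≤ m, IsSubalgebra b (C i)) ∧
    ∀ i < m, IsQuasiIdealIn b (C (i + 1)) (C i)

/-- `H` is a subquasi-ideal of `L` if it is an `m`-step subquasi-ideal for some `m`. -/
def IsSubquasiIdeal (b : L →ₗ[F] L →ₗ[F] L) (H : Submodule F L) : Prop :=
  ∃ m : ℕ, IsSubquasiIdealSteps b m H

/-- Lower central series: `lowerCentral b K n` is `K^{n+1}` in the paper's notation,
i.e. `K^1 = K`, `K^{k+1} = [K^k, K]`. -/
def lowerCentral (b : L →ₗ[F] L →ₗ[F] L) (K : Submodule F L) : ℕ → Submodule F L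
  | 0 => K
  | n + 1 => bspan b (lowerCentral b K n) K

/-- Derived series: `derSeries b H n` is `H^{(n+1)}` in the paper's notation,
i.e. `H^{(1)} = H`, `H^{(k+1)} = [H^{(k)}, H^{(k)}]`. -/
def derSeries (b : L →ₗ[F] L →ₗ[F] L) (H : Submodule F L) : ℕ → Submodule F L
  | 0 => H
  | n + 1 => bspan b (derSeries b H n) (derSeries b H n)

/-- The core `H_L` of `H`: the sum of all ideals of `L` contained in `H`. -/
def coreOf (b : L →ₗ[F] L →ₗ[F] L) (H : Submodule F L) : Submodule F L :=
  sSup {A : Submodule F L | IsIdeal b A ∧ A ≤ H}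

/-- A derivation of the bracket `b`. -/
def IsDerivation (b : L →ₗ[F] L →ₗ[F] L) (d : L →ₗ[F] L) : Prop :=
  ∀ x y : L, d (b x y) = b (d x) y + b x (d y)

/-- `I`: the span of all squares `[x,x]`, `x ∈ L`. -/
def sqSpan (b : L →ₗ[F] L →ₗ[F] L) : Submodule F L :=
  Submodule.span F {z : L | ∃ x : L, z = b x x}

/-- The centre `Z(L) = {z | [z,x] = [x,z] = 0 for all x}`. -/
def lcenter (b : L →ₗ[F] L →ₗ[F] L) : Submodule F L where
  carrier := {z : L | ∀ x : L, b z x = 0 ∧ b x z = 0}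
  zero_mem' := by intro x; simp
  add_mem' := by
    intro y z hy hz x
    obtain ⟨h1, h2⟩ := hy x
    obtain ⟨h3, h4⟩ := hz x
    constructor <;> simp [h1, h2, h3, h4]
  smul_mem' := by
    intro c z hz x
    obtain ⟨h1, h2⟩ := hz x
    constructor <;> simp [h1, h2]

/-- The centre of a subalgebra `E`, as a subspace of `L`:
`Z(E) = {z ∈ E | [z,x] = [x,z] = 0 for all x ∈ E}`. -/
def centerIn (b : L →ₗ[F] L →ₗ[F] L) (E : Submodule F L) : Submodule F L where
  carrier := {z : L | z ∈ E ∧ ∀ x ∈ E, b z x = 0 ∧ b x z = 0}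
  zero_mem' := ⟨E.zero_mem, by intro x _; simp⟩
  add_mem' := by
    intro y z hy hz
    refine ⟨E.add_mem hy.1 hz.1, fun x hx => ?_⟩
    obtain ⟨h1, h2⟩ := hy.2 x hx
    obtain ⟨h3, h4⟩ := hz.2 x hx
    constructor <;> simp [h1, h2, h3, h4]
  smul_mem' := by
    intro c z hz
    refine ⟨E.smul_mem c hz.1, fun x hx => ?_⟩
    obtain ⟨h1, h2⟩ := hz.2 x hx
    constructor <;> simp [h1, h2]

/-- The subalgebra generated by a set `S`. -/
def subalgGen (b : L →ₗ[F] L →ₗ[F] L) (S : Set L) : Submodule F L :=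
  sInf {K : Submodule F L | IsSubalgebra b K ∧ S ⊆ K}

/-- `x` is a left Engel element: for each `y` there is `n` with `R_x^n(y) = 0`,
where `R_x(y) = [y,x]`. -/
def IsLeftEngel (b : L →ₗ[F] L →ₗ[F] L) (x : L) : Prop :=
  ∀ y : L, ∃ n : ℕ, ((b.flip x) ^ n) y = 0

end LeibnizDefs

variable {F L : Type*} [Field F] [AddCommGroup L] [Module F L]


section QIHelpers

variable {F L : Type*} [Field F] [AddCommGroup L] [Module F L]
variable {b : L →ₗ[F] L →ₗ[F] L} {H : Submodule F L}

theorem mem_bspan' {A C : Submodule F L} {a c : L} (ha : a ∈ A) (hc : c ∈ C) :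
    b a c ∈ bspan b A C :=
  Submodule.subset_span ⟨a, ha, c, hc, rfl⟩

theorem bspan_le' {A C D : Submodule F L}
    (h : ∀ a ∈ A, ∀ c ∈ C, b a c ∈ D) : bspan b A C ≤ D := by
  rw [bspan, Submodule.span_le]
  rintro z ⟨a, ha, c, hc, rfl⟩
  exact h a ha c hc

theorem bspan_mono' {A A' C C' : Submodule F L} (hA : A ≤ A') (hC : C ≤ C') :
    bspan b A C ≤ bspan b A' C' :=
  Submodule.span_mono (by rintro z ⟨a, ha, c, hc, rfl⟩; exact ⟨a, hA ha, c, hC hc, rfl⟩)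

theorem bspan_nested_right' {A V W D : Submodule F L}
    (h : ∀ a ∈ A, ∀ v ∈ V, ∀ w ∈ W, b a (b v w) ∈ D) :
    bspan b A (bspan b V W) ≤ D := by
  refine bspan_le' fun a ha c hc => ?_
  exact Submodule.mem_comap.mp
    ((bspan_le' (D := D.comap (b a)) fun v hv w hw =>
      Submodule.mem_comap.mpr (h a ha v hv w hw)) hc)

theorem bspan_nested_left' {V W C D : Submodule F L}
    (h : ∀ v ∈ V, ∀ w ∈ W, ∀ c ∈ C, b (b v w) c ∈ D) :
    bspan b (bspan b V W) C ≤ D := by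
  refine bspan_le' fun a ha c hc => ?_
  exact Submodule.mem_comap.mp
    ((bspan_le' (D := D.comap (b.flip c)) fun v hv w hw =>
      Submodule.mem_comap.mpr (h v hv w hw c hc)) ha)

theorem leib2 (hb : IsLeibniz b) (x y z : L) :
    b (b x y) z = b x (b y z) + b (b x z) y := by
  rw [hb x y z]; abel

theorem bsq_zero (hb : IsLeibniz b) (z y : L) : b z (b y y) = 0 := by
  rw [hb z y y, sub_self]

theorem bsym_zero (hb : IsLeibniz b) (z x v : L) : b z (b x v + b v x) = 0 := by
  have h : b x v + b v x = b (x + v) (x + v) - b x x - b v v := by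
    simp only [map_add, LinearMap.add_apply]; abel
  rw [h, map_sub, map_sub, bsq_zero hb, bsq_zero hb, bsq_zero hb]
  simp

theorem decompL (hH : IsQuasiIdeal b H) (x : L) {h : L} (hh : h ∈ H) :
    ∃ h' ∈ H, ∃ c : F, b x h = h' + c • x := by
  have hm : b x h ∈ H ⊔ Submodule.span F {x} :=
    hH (Submodule.span F {x})
      (Submodule.mem_sup_right (mem_bspan' (Submodule.mem_span_singleton_self x) hh))
  obtain ⟨h', hh', z, hz, heq⟩ := Submodule.mem_sup.mp hm
  obtain ⟨c, rfl⟩ := Submodule.mem_span_singleton.mp hz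
  exact ⟨h', hh', c, heq.symm⟩

theorem decompR (hH : IsQuasiIdeal b H) (x : L) {h : L} (hh : h ∈ H) :
    ∃ h' ∈ H, ∃ c : F, b h x = h' + c • x := by
  have hm : b h x ∈ H ⊔ Submodule.span F {x} :=
    hH (Submodule.span F {x})
      (Submodule.mem_sup_left (mem_bspan' hh (Submodule.mem_span_singleton_self x)))
  obtain ⟨h', hh', z, hz, heq⟩ := Submodule.mem_sup.mp hm
  obtain ⟨c, rfl⟩ := Submodule.mem_span_singleton.mp hz
  exact ⟨h', hh', c, heq.symm⟩

theorem hS_le (hH : IsQuasiIdeal b H) : bspan b H H ≤ H := by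
  have := hH H
  rwa [sup_idem, sup_idem] at this

theorem lcsucc (K : Submodule F L) (k : ℕ) :
    lowerCentral b K (k + 1) = bspan b (lowerCentral b K k) K := rfl

/-- `[L, H²] ⊆ H`. -/
theorem memH_left (hb : IsLeibniz b) (hH : IsQuasiIdeal b H) (x : L) {w : L}
    (hw : w ∈ bspan b H H) : b x w ∈ H := by
  refine Submodule.mem_comap.mp
    ((bspan_le' (D := H.comap (b x)) fun u hu v hv => Submodule.mem_comap.mpr ?_) hw)
  obtain ⟨u₁, hu₁, lam, hxu⟩ := decompL hH x hu
  obtain ⟨v₁, hv₁, mu, hxv⟩ := decompL hH x hv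
  have key : b x (b u v) = b u₁ v - b v₁ u + lam • v₁ - mu • u₁ := by
    rw [hb x u v, hxu, hxv]
    simp only [map_add, map_smul, LinearMap.add_apply, LinearMap.smul_apply, hxu, hxv]
    module
  rw [key]
  exact sub_mem (add_mem (sub_mem (hS_le hH (mem_bspan' hu₁ hv))
    (hS_le hH (mem_bspan' hv₁ hu))) (H.smul_mem _ hv₁)) (H.smul_mem _ hu₁)

/-- `[H², H] ⊆ H²`. -/
theorem SH_le (hb : IsLeibniz b) (hH : IsQuasiIdeal b H) :
    bspan b (bspan b H H) H ≤ bspan b H H := by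
  refine bspan_nested_left' fun u hu v hv h hh => ?_
  rw [leib2 hb u v h]
  exact add_mem (mem_bspan' hu (hS_le hH (mem_bspan' hv hh)))
    (mem_bspan' (hS_le hH (mem_bspan' hu hh)) hv)

/-- `[H, H²] ⊆ H²`. -/
theorem HS_le (hb : IsLeibniz b) (hH : IsQuasiIdeal b H) :
    bspan b H (bspan b H H) ≤ bspan b H H := by
  refine bspan_nested_right' fun h hh u hu v hv => ?_
  rw [hb h u v]
  exact sub_mem (mem_bspan' (hS_le hH (mem_bspan' hh hu)) hv)
    (mem_bspan' (hS_le hH (mem_bspan' hh hv)) hu)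

/-- `[(H²)^k, H] ⊆ (H²)^k`. -/
theorem F1a (hb : IsLeibniz b) (hH : IsQuasiIdeal b H) :
    ∀ k, bspan b (lowerCentral b (bspan b H H) k) H ≤ lowerCentral b (bspan b H H) k := by
  intro k
  induction k with
  | zero => exact SH_le hb hH
  | succ k ih =>
    rw [lcsucc]
    refine bspan_nested_left' fun c hc s hs h hh => ?_
    rw [leib2 hb c s h]
    exact add_mem (mem_bspan' hc (SH_le hb hH (mem_bspan' hs hh)))
      (mem_bspan' (ih (mem_bspan' hc hh)) hs)

/-- `[(H²)^a, (H²)^k] ⊆ (H²)^{a+k+1}`. -/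
theorem F3 (hb : IsLeibniz b) (hH : IsQuasiIdeal b H) :
    ∀ k a, bspan b (lowerCentral b (bspan b H H) a) (lowerCentral b (bspan b H H) k) ≤
      lowerCentral b (bspan b H H) (a + k + 1) := by
  intro k
  induction k with
  | zero => intro a; exact le_of_eq rfl
  | succ k ih =>
    intro a
    rw [lcsucc]
    refine bspan_nested_right' fun t ht c hc s hs => ?_
    rw [hb t c s]
    refine sub_mem (mem_bspan' (ih a (mem_bspan' ht hc)) hs) ?_
    have h1 : b t s ∈ lowerCentral b (bspan b H H) (a + 1) := mem_bspan' ht hs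
    have h2 := ih (a + 1) (mem_bspan' h1 hc)
    have e : a + 1 + k + 1 = a + (k + 1) + 1 := by omega
    rwa [e] at h2

/-- `[H, (H²)^k] ⊆ (H²)^k`. -/
theorem F1b (hb : IsLeibniz b) (hH : IsQuasiIdeal b H) :
    ∀ k, bspan b H (lowerCentral b (bspan b H H) k) ≤ lowerCentral b (bspan b H H) k := by
  intro k
  induction k with
  | zero => exact HS_le hb hH
  | succ k ih =>
    rw [lcsucc]
    refine bspan_nested_right' fun h hh c hc s hs => ?_
    rw [hb h c s]
    refine sub_mem (mem_bspan' (ih (mem_bspan' hh hc)) hs) ?_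
    have h1 : b h s ∈ lowerCentral b (bspan b H H) 0 := HS_le hb hH (mem_bspan' hh hs)
    have h2 := (F3 hb hH k 0) (mem_bspan' h1 hc)
    have e : 0 + k + 1 = k + 1 := by omega
    rwa [e] at h2

theorem lc_le (hb : IsLeibniz b) (hH : IsQuasiIdeal b H) (k : ℕ) :
    lowerCentral b (bspan b H H) (k + 1) ≤ lowerCentral b (bspan b H H) k :=
  (bspan_mono' le_rfl (hS_le hH)).trans (F1a hb hH k)

theorem dichot (hb : IsLeibniz b) (hH : IsQuasiIdeal b H) (x : L) :
    (∃ w₀ ∈ H, ∀ z : L, b z x = b z w₀) ∨ (∀ w ∈ bspan b H H, b w x ∈ H) := by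
  by_cases hc : ∃ v ∈ H, ∃ h' ∈ H, ∃ c : F, c ≠ 0 ∧ b x v + b v x = h' + c • x
  · obtain ⟨v, hv, h', hh', c, hc0, heq⟩ := hc
    refine Or.inl ⟨(-c⁻¹) • h', H.smul_mem _ hh', fun z => ?_⟩
    have h0 : b z (b x v + b v x) = 0 := bsym_zero hb z x v
    rw [heq, map_add, map_smul] at h0
    have h2 : c • b z x = - b z h' := by
      rwa [add_comm, add_eq_zero_iff_eq_neg] at h0
    rw [map_smul]
    calc b z x = c⁻¹ • (c • b z x) := by rw [smul_smul, inv_mul_cancel₀ hc0, one_smul]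
    _ = (-c⁻¹) • b z h' := by rw [h2, smul_neg, neg_smul, ← neg_smul]
  · push_neg at hc
    refine Or.inr fun w hw => ?_
    refine Submodule.mem_comap.mp
      ((bspan_le' (D := H.comap (b.flip x)) fun u hu v hv => Submodule.mem_comap.mpr ?_) hw)
    obtain ⟨u₂, hu₂, al, hux⟩ := decompR hH x hu
    obtain ⟨v₂, hv₂, be, hvx⟩ := decompR hH x hv
    obtain ⟨v₁, hv₁, ga, hxv⟩ := decompL hH x hv
    have hz : ga = -be := by
      by_contra hne
      refine hc v hv (v₁ + v₂) (add_mem hv₁ hv₂) (ga + be)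
        (fun h0 => hne (eq_neg_of_add_eq_zero_left h0)) ?_
      rw [hxv, hvx]
      module
    rw [hz] at hxv
    have key : b (b u v) x = b u v₂ + be • u₂ + b u₂ v + al • v₁ := by
      rw [leib2 hb u v x, hvx, hux]
      simp only [map_add, map_smul, LinearMap.add_apply, LinearMap.smul_apply, hux, hxv]
      module
    rw [LinearMap.flip_apply, key]
    exact add_mem (add_mem (add_mem (hS_le hH (mem_bspan' hu hv₂)) (H.smul_mem _ hu₂))
      (hS_le hH (mem_bspan' hu₂ hv))) (H.smul_mem _ hv₁)

theorem mainG (hb : IsLeibniz b) (hH : IsQuasiIdeal b H) :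
    ∀ m, bspan b ⊤ (lowerCentral b (bspan b H H) (m + 1)) ⊔
      bspan b (lowerCentral b (bspan b H H) (m + 1)) ⊤ ≤
      lowerCentral b (bspan b H H) m := by
  intro m
  induction m with
  | zero =>
    refine sup_le ?_ ?_
    · rw [lcsucc]
      refine bspan_nested_right' fun x _ c hc w hw => ?_
      rw [hb x c w]
      exact sub_mem ((F1b hb hH 0) (mem_bspan' (memH_left hb hH x hc) hw))
        ((F1b hb hH 0) (mem_bspan' (memH_left hb hH x hw) hc))
    · rw [lcsucc]
      refine bspan_nested_left' fun c hc w hw x _ => ?_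
      rcases dichot hb hH x with ⟨w₀, hw₀, hzx⟩ | h2
      · rw [hzx (b c w)]
        exact lc_le hb hH 0 ((F1a hb hH 1) (mem_bspan' (mem_bspan' hc hw) hw₀))
      · rw [leib2 hb c w x]
        exact add_mem ((F1a hb hH 0) (mem_bspan' hc (h2 w hw)))
          ((F1b hb hH 0) (mem_bspan' (h2 c hc) hw))
  | succ m ih =>
    have ihL : bspan b ⊤ (lowerCentral b (bspan b H H) (m + 1)) ≤
        lowerCentral b (bspan b H H) m := le_sup_left.trans ih
    have ihR : bspan b (lowerCentral b (bspan b H H) (m + 1)) ⊤ ≤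
        lowerCentral b (bspan b H H) m := le_sup_right.trans ih
    refine sup_le ?_ ?_
    · rw [lcsucc]
      refine bspan_nested_right' fun x _ c hc w hw => ?_
      rw [hb x c w]
      refine sub_mem (mem_bspan' (ihL (mem_bspan' Submodule.mem_top hc)) hw) ?_
      exact (F1b hb hH (m + 1)) (mem_bspan' (memH_left hb hH x hw) hc)
    · rw [lcsucc]
      refine bspan_nested_left' fun c hc w hw x _ => ?_
      rcases dichot hb hH x with ⟨w₀, hw₀, hzx⟩ | h2
      · rw [hzx (b c w)]
        exact lc_le hb hH (m + 1) ((F1a hb hH (m + 2)) (mem_bspan' (mem_bspan' hc hw) hw₀))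
      · rw [leib2 hb c w x]
        refine add_mem ((F1a hb hH (m + 1)) (mem_bspan' hc (h2 w hw))) ?_
        exact mem_bspan' (ihR (mem_bspan' hc Submodule.mem_top)) hw

end QIHelpers

/-- If `H` is a quasi-ideal of a Leibniz algebra `L`, then
`[L,(H²)^n] + [(H²)^n,L] ⊆ (H²)^{n-1}` for all `n ≥ 2`.
Here `(H²)^k = lowerCentral b (bspan b H H) (k-1)`. -/
theorem bracket_lcs_le_of_quasiIdeal (b : L →ₗ[F] L →ₗ[F] L) (hb : IsLeibniz b)
    (H : Submodule F L) (hH : IsQuasiIdeal b H) (n : ℕ) (hn : 2 ≤ n) :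
    bspan b ⊤ (lowerCentral b (bspan b H H) (n - 1)) ⊔
      bspan b (lowerCentral b (bspan b H H) (n - 1)) ⊤ ≤
      lowerCentral b (bspan b H H) (n - 2) := by
  obtain ⟨m, rfl⟩ : ∃ m, n = m + 2 := ⟨n - 2, by omega⟩
  have h1 : m + 2 - 1 = m + 1 := rfl
  have h2 : m + 2 - 2 = m := rfl
  rw [h1, h2]
  exact mainG hb hH m
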